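/- Let I be a nil (two-sided) ideal of a ring R. Then R is Yaqub nil-clean if and only if R/I is Yaqub nil-clean. -/

import Mathlib

/-! Both `a ± a ^ 3` are polynomial in `a`, so the condition passes along any surjective ring
map. Conversely, if `f a ± f a ^ 3` is nilpotent then some power of `a ± a ^ 3` lies in the kernel
of the quotient map, which is the nil ideal `I`, so `a ± a ^ 3` is itself nilpotent. -/

def YaqubNilClean (R : Type*) [Ring R] : Prop :=
  ∀ a : R, IsNilpotent (a + a ^ 3) ∨ IsNilpotent (a - a ^ 3)

section

variable {R S : Type*} [Ring R] [Ring S]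

theorem IsNilpotent.of_map_of_ker_isNilpotent {f : R →+* S}
    (hf : ∀ x ∈ TwoSidedIdeal.ker f, IsNilpotent x) {x : R} (hx : IsNilpotent (f x)) :
    IsNilpotent x := by
  obtain ⟨n, hn⟩ := hx
  exact .of_pow (hf _ (by rwa [TwoSidedIdeal.mem_ker, map_pow]))

theorem YaqubNilClean.of_surjective (f : R →+* S) (hf : Function.Surjective f)
    (h : YaqubNilClean R) : YaqubNilClean S := by
  intro b
  obtain ⟨a, rfl⟩ := hf b
  rcases h a with ha | ha
  · exact .inl (by simpa only [map_add, map_pow] using ha.map f)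
  · exact .inr (by simpa only [map_sub, map_pow] using ha.map f)

theorem YaqubNilClean.of_ker_isNilpotent (f : R →+* S)
    (hf : ∀ x ∈ TwoSidedIdeal.ker f, IsNilpotent x) (h : YaqubNilClean S) :
    YaqubNilClean R := by
  intro a
  rcases h (f a) with ha | ha
  · exact .inl (.of_map_of_ker_isNilpotent hf (by rwa [map_add, map_pow]))
  · exact .inr (.of_map_of_ker_isNilpotent hf (by rwa [map_sub, map_pow]))

end

theorem stmt8 (R : Type*) [Ring R] (I : TwoSidedIdeal R)
    (hI : ∀ x ∈ I, IsNilpotent x) :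
    YaqubNilClean R ↔ YaqubNilClean I.ringCon.Quotient := by
  rw [← TwoSidedIdeal.ker_ringCon_mk' I] at hI
  exact ⟨.of_surjective _ I.ringCon.mk'_surjective, .of_ker_isNilpotent _ hI⟩
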